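/- Let k ≥ 1 and n_1,…,n_k ≥ 1, and let B be the bouquet graph with vertex set {0,1,…,k} ⊎ {v_i^j : 1 ≤ i ≤ k, 1 ≤ j ≤ n_i} and directed edges from each v_i^j to 0, from each i ∈ {1,…,k} to each v_i^j (1 ≤ j ≤ n_i), and from 0 to each i ∈ {1,…,k}; fix any total ordering of the vertices. For I ⊆ {1,…,k} let W_I = {0} ∪ {i : i ∈ I} ∪ {v_i^j : i ∈ I, 1 ≤ j ≤ n_i}. Then m(W_I) = ∏_{i ∉ I} (n_i − 1) for every I ⊆ {1,…,k}, and m(W) = 0 for every strongly connected subset W of the vertices of B that is not of the form W_I. -/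

import Mathlib

open Classical Finset

noncomputable section

variable {V : Type*} {R : Type*} [CommRing R]

/-- An oriented spanning tree of the digraph `E` on `V`: `root` has outdegree 0
(convention `out root = root`), every other vertex `v` has a unique outgoing edge
`(v, out v)` which is an edge of the graph, and iterating `out` from any vertex
reaches the root (no cycles). -/
structure SpTree [Fintype V] (E : V → V → Prop) where
  root : V
  out : V → V
  out_root : out root = root
  edge_mem : ∀ v, v ≠ root → E v (out v)
  reach : ∀ v, ∃ n, out^[n] v = root

theorem SpTree.ext' [Fintype V] {E : V → V → Prop} {a b : SpTree E}
    (h1 : a.root = b.root) (h2 : a.out = b.out) : a = b := by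
  cases a; cases b; dsimp at h1 h2; subst h1; subst h2; rfl

noncomputable instance [Fintype V] (E : V → V → Prop) : Fintype (SpTree E) :=
  Fintype.ofInjective (fun a => (a.root, a.out)) fun a b h =>
    SpTree.ext' (congrArg Prod.fst h) (congrArg Prod.snd h)

/-- An oriented forest of the digraph `E`, rooted in the set `U`. -/
structure SpForest [Fintype V] (E : V → V → Prop) (U : Finset V) where
  out : V → V
  out_root : ∀ v ∈ U, out v = v
  edge_mem : ∀ v, v ∉ U → E v (out v)
  reach : ∀ v, ∃ n, out^[n] v ∈ U

theorem SpForest.ext' [Fintype V] {E : V → V → Prop} {U : Finset V} {a b : SpForest E U}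
    (h : a.out = b.out) : a = b := by
  cases a; cases b; dsimp at h; subst h; rfl

noncomputable instance [Fintype V] (E : V → V → Prop) (U : Finset V) :
    Fintype (SpForest E U) :=
  Fintype.ofInjective SpForest.out fun _ _ h => SpForest.ext' h

/-- The adjacency relation of the tree graph `𝒯G`: there is an edge from `a` to `b`
if `b` is obtained from `a` by adding the edge `(a.root, b.root)` of `G` and deleting
the edge of `a` going out of `b.root`. -/
def TStep [Fintype V] (E : V → V → Prop) (a b : SpTree E) : Prop :=
  E a.root b.root ∧ a.root ≠ b.root ∧ b.out a.root = b.root ∧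
    ∀ v, v ≠ a.root → v ≠ b.root → b.out v = a.out v

/-- The set `W` is strongly connected in the digraph `E` (for the induced subgraph). -/
def SConn (E : V → V → Prop) (W : Set V) : Prop :=
  ∀ u ∈ W, ∀ v ∈ W, Relation.ReflTransGen (fun a b => E a b ∧ a ∈ W ∧ b ∈ W) u v

/-- Edge-weighted Laplacian matrix of the digraph `E`, with weight `x (v,w)` on the
edge from `v` to `w`. -/
def lapM [Fintype V] (E : V → V → Prop) (x : V × V → R) : Matrix V V R :=
  Matrix.of fun v w =>
    if v = w then -(∑ u ∈ univ.filter (fun u => E v u), x (v, u))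
    else if E v w then x (v, w) else 0

/-- Schrödinger operator `L = Q + Y` with potential `y`. -/
def schrM [Fintype V] (E : V → V → Prop) (x : V × V → R) (y : V → R) : Matrix V V R :=
  lapM E x + Matrix.diagonal y

/-- Weighted adjacency matrix. -/
def adjM [Fintype V] (E : V → V → Prop) (x : V × V → R) : Matrix V V R :=
  Matrix.of fun v w => if E v w then x (v, w) else 0

/-- Submatrix keeping rows and columns indexed by `W`. -/
def subM [Fintype V] (M : Matrix V V R) (W : Finset V) :
    Matrix {v // v ∈ W} {v // v ∈ W} R :=
  M.submatrix Subtype.val Subtype.val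

/-- The lifted edge weights on the tree graph: the edge from `a` to `b` in `𝒯G`
carries the weight of the edge of `G` from `a.root` to `b.root`. -/
def xT [Fintype V] (E : V → V → Prop) (x : V × V → R) : SpTree E × SpTree E → R :=
  fun p => x (p.1.root, p.2.root)

/-- The lifted potential on the tree graph. -/
def yT [Fintype V] (E : V → V → Prop) (y : V → R) : SpTree E → R :=
  fun a => y a.root

/-- Weight `π_𝐚` of a spanning tree: product of its edge weights. -/
def treeWt [Fintype V] {E : V → V → Prop} (x : V × V → R) (a : SpTree E) : R :=
  ∏ v ∈ univ.filter (fun v => v ≠ a.root), x (v, a.out v)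

/-- Generating polynomial of the oriented spanning trees of `E`. -/
def FGpoly [Fintype V] (E : V → V → Prop) (x : V × V → R) : R :=
  ∑ a : SpTree E, treeWt x a

/-- Weight `π_𝐟` of a forest: product of its edge weights. -/
def forestWt [Fintype V] {E : V → V → Prop} {U : Finset V} (x : V × V → R)
    (f : SpForest E U) : R :=
  ∏ v ∈ univ.filter (fun v => v ∉ U), x (v, f.out v)

/-- Generating polynomial `Ψ_U` of the oriented forests of `E` rooted in `U`. -/
def PsiF [Fintype V] (E : V → V → Prop) (U : Finset V) (x : V × V → R) : R :=
  ∑ f : SpForest E U, forestWt x f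

/-- Generating polynomial of the oriented spanning trees of the tree graph `𝒯G`. -/
def FTGpoly [Fintype V] (E : V → V → Prop) (x : V × V → R) : R :=
  FGpoly (TStep E) (xT E x)

/-- The polynomial ring `ℂ[x_e (e ∈ V × V), y_v (v ∈ V)]`. -/
abbrev Rng (V : Type*) := MvPolynomial ((V × V) ⊕ V) ℂ

/-- The edge variable `x_e`. -/
def xv {V : Type*} : V × V → Rng V := fun e => MvPolynomial.X (Sum.inl e)

/-- The vertex variable `y_v`. -/
def yv {V : Type*} : V → Rng V := fun v => MvPolynomial.X (Sum.inr v)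

/-! ### The exploration algorithm -/

/-- The state of the exploration algorithm: a set `A` of explored vertices, a FIFO
list `Lq` of edges to be examined, a reservoir `F` of edges, and the set `Er` of
erased vertices. -/
structure ExpState (V : Type*) where
  A : Finset V
  Lq : List (V × V)
  F : Finset (V × V)
  Er : Finset V

/-- The list of the edges of `S` with target `w`, ordered by increasing source. -/
def sortedTo (ord : LinearOrder V) (S : Finset (V × V)) (w : V) : List (V × V) :=
  letI := ord
  (((S.filter (fun f => f.2 = w)).image Prod.fst).sort (· ≤ ·)).map fun u => (u, w)

/-- The edge `e` belongs to the tree `a`. -/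
def inTree [Fintype V] {E : V → V → Prop} (a : SpTree E) (e : V × V) : Prop :=
  e.1 ≠ a.root ∧ a.out e.1 = e.2

/-- One iteration of the exploration algorithm: pick the first edge `e` of the list,
with source `w`; if `e` belongs to the tree then add `w` to `A`, delete all edges with
source `w` from the list, and append the edges of `F` with target `w` by increasing
source; otherwise erase `w`, deleting all edges with source or target `w` from the
list and from `F`. -/
def expStep [Fintype V] {E : V → V → Prop} (ord : LinearOrder V) (a : SpTree E)
    (s : ExpState V) : ExpState V :=
  match s.Lq with
  | [] => s
  | e :: rest =>
    if inTree a e then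
      { A := insert e.1 s.A
        Lq := rest.filter (fun f => decide (f.1 ≠ e.1)) ++ sortedTo ord s.F e.1
        F := s.F
        Er := s.Er }
    else
      { A := s.A
        Lq := rest.filter (fun f => decide (f.1 ≠ e.1 ∧ f.2 ≠ e.1))
        F := s.F.filter (fun f => f.1 ≠ e.1 ∧ f.2 ≠ e.1)
        Er := insert e.1 s.Er }

/-- The initial state of the exploration algorithm run on a tree rooted at `v`:
`A = {v}`, the list consists of the edges with target `v` by increasing source, and
`F` is the set of edges with source `≠ v`. -/
def expInit [Fintype V] {E : V → V → Prop} (ord : LinearOrder V) (a : SpTree E) :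
    ExpState V :=
  letI := ord
  { A := {a.root}
    Lq := ((univ.filter (fun u => E u a.root)).sort (· ≤ ·)).map fun u => (u, a.root)
    F := univ.filter fun f : V × V => E f.1 f.2 ∧ f.1 ≠ a.root
    Er := (∅ : Finset V) }

/-- The final state of the exploration algorithm (the number of iterations below is
large enough for the list to be exhausted, after which the state no longer moves). -/
def expRun [Fintype V] {E : V → V → Prop} (ord : LinearOrder V) (a : SpTree E) :
    ExpState V :=
  (expStep ord a)^[2 * Fintype.card (V × V) + 1] (expInit ord a)

/-- The set `φ(𝐚)` of explored vertices. -/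
def expPhi [Fintype V] {E : V → V → Prop} (ord : LinearOrder V) (a : SpTree E) : Finset V :=
  (expRun ord a).A

/-- The set of erased vertices. -/
def expEr [Fintype V] {E : V → V → Prop} (ord : LinearOrder V) (a : SpTree E) : Finset V :=
  (expRun ord a).Er

/-- The set `ψ(𝐚)`: the strongly connected component of the root in the subgraph
induced on `φ(𝐚)`. -/
def expPsi [Fintype V] {E : V → V → Prop} (ord : LinearOrder V) (a : SpTree E) : Finset V :=
  univ.filter fun u => u ∈ expPhi ord a ∧
    Relation.ReflTransGen
      (fun p q => E p q ∧ p ∈ expPhi ord a ∧ q ∈ expPhi ord a) a.root u ∧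
    Relation.ReflTransGen
      (fun p q => E p q ∧ p ∈ expPhi ord a ∧ q ∈ expPhi ord a) u a.root

/-- The multiplicity `m(W, w)`: the number of oriented spanning trees `𝐚` rooted at
`w` with `ψ(𝐚) = W`. -/
def multCount [Fintype V] (E : V → V → Prop) (ord : LinearOrder V) (W : Finset V)
    (w : V) : ℕ :=
  Nat.card {a : SpTree E // a.root = w ∧ expPsi ord a = W}

/-- The multiplicity `m(W)` (the common value of the `m(W, w)`, `w ∈ W`). -/
def multW [Fintype V] (E : V → V → Prop) (ord : LinearOrder V) (W : Finset V) : ℕ :=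
  letI := ord
  if h : W.Nonempty then multCount E ord W (W.min' h) else 0

end
/-- Vertices of the bouquet graph: `Sum.inl none` is the central vertex `0`,
`Sum.inl (some i)` is the petal vertex `i ∈ {1,…,k}`, and `Sum.inr ⟨i, j⟩` is the
vertex `v_i^j` (`1 ≤ j ≤ n_i`). -/
abbrev BV (k : ℕ) (n : Fin k → ℕ) := (Option (Fin k)) ⊕ (Σ i : Fin k, Fin (n i))

/-- Edges of the bouquet graph: from each `v_i^j` to `0`, from each petal vertex `i`
to each `v_i^j`, and from `0` to each petal vertex `i`. -/
def BE (k : ℕ) (n : Fin k → ℕ) : BV k n → BV k n → Prop := fun a b =>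
  match a, b with
  | Sum.inr _, Sum.inl none => True
  | Sum.inl (some i), Sum.inr ⟨i', _⟩ => i = i'
  | Sum.inl none, Sum.inl (some _) => True
  | _, _ => False

/-- The strongly connected subset `W_I` consisting of `0` together with all the
vertices of the `i`-th petal for `i ∈ I`. -/
noncomputable def WI (k : ℕ) (n : Fin k → ℕ) (I : Finset (Fin k)) : Finset (BV k n) :=
  univ.filter fun v =>
    match v with
    | Sum.inl none => True
    | Sum.inl (some i) => i ∈ I
    | Sum.inr ⟨i, _⟩ => i ∈ I

/-!
A spanning tree `𝐚` of the bouquet rooted at `w` is determined by `w` and by its profile: the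
leaf `v_i^{c_i}` that each petal vertex `i` points to (leaves point to `0`, and `0` points to
the petal containing `w`). After the tree path from `0` to `w` has been explored, the
exploration absorbs every other leaf, because the edges from the leaves to `0` are tree edges.
This queues, for each petal `i`, the edges `i → v_i^j` in the order of the leaves, and the first
of them decides petal `i`: it is explored if it is the tree edge, i.e. if `v_i^{c_i}` is the
first leaf of petal `i`, and erased otherwise. The edges `0 → i` queued by the explored petals
are not tree edges, so the first of them erases `0` and ends the run. Hence `ψ(𝐚) = W_I`,
where `I` consists of the petal of `w` and the petals whose tree edge goes to their first leaf.
For `w ∈ W_I` this leaves one choice of `c_i` for `i ∈ I` and `n_i − 1` choices for `i ∉ I`.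
-/

theorem SpTree.root_mem_of_mapsTo {V : Type*} [Fintype V] {E : V → V → Prop} (a : SpTree E)
    {C : Set V} (hC : Set.MapsTo a.out C C) {x : V} (hx : x ∈ C) : a.root ∈ C := by
  obtain ⟨m, hm⟩ := a.reach x
  exact hm ▸ hC.iterate m hx

section SortedTo

variable {V : Type*} (ord : LinearOrder V)

lemma mem_sortedTo {S : Finset (V × V)} {w : V} {e : V × V} :
    e ∈ sortedTo ord S w ↔ e ∈ S ∧ e.2 = w := by
  unfold sortedTo
  constructor
  · simp only [List.mem_map, Finset.mem_sort, Finset.mem_image, Finset.mem_filter]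
    rintro ⟨_, ⟨f, ⟨hf, rfl⟩, rfl⟩, rfl⟩
    exact ⟨hf, rfl⟩
  · rintro ⟨he, rfl⟩
    simp only [List.mem_map, Finset.mem_sort, Finset.mem_image, Finset.mem_filter]
    exact ⟨e.1, ⟨e, ⟨he, rfl⟩, rfl⟩, rfl⟩

lemma sortedTo_of_unique_source {S : Finset (V × V)} {w u : V}
    (hS : ∀ f ∈ S, f.2 = w → f.1 = u) :
    sortedTo ord S w = if (u, w) ∈ S then [(u, w)] else [] := by
  have himg : (S.filter (fun f => f.2 = w)).image Prod.fst =
      if (u, w) ∈ S then {u} else ∅ := by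
    ext x
    simp only [Finset.mem_image, Finset.mem_filter]
    split_ifs with h
    · refine ⟨?_, fun hx => ⟨(u, w), ⟨h, rfl⟩, (Finset.mem_singleton.mp hx).symm⟩⟩
      rintro ⟨f, ⟨hf, hf2⟩, rfl⟩
      exact Finset.mem_singleton.mpr (hS f hf hf2)
    · simp only [Finset.notMem_empty, iff_false, not_exists, not_and]
      rintro f ⟨hf, hf2⟩ rfl
      exact h (by rw [← hS f hf hf2, ← hf2]; exact hf)
  unfold sortedTo
  rw [himg]
  split_ifs <;> simp

end SortedTo

section Exploration

variable {V : Type*} [Fintype V] {E : V → V → Prop} (ord : LinearOrder V) (a : SpTree E)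

lemma expStep_of_Lq_nil {s : ExpState V} (h : s.Lq = []) : expStep ord a s = s := by
  unfold expStep; rw [h]

lemma expStep_of_inTree {s : ExpState V} {e : V × V} {rest : List (V × V)}
    (hL : s.Lq = e :: rest) (h : inTree a e) :
    expStep ord a s =
      { A := insert e.1 s.A
        Lq := rest.filter (fun f => decide (f.1 ≠ e.1)) ++ sortedTo ord s.F e.1
        F := s.F
        Er := s.Er } := by
  unfold expStep; rw [hL]; simp [h]

lemma expStep_of_not_inTree {s : ExpState V} {e : V × V} {rest : List (V × V)}
    (hL : s.Lq = e :: rest) (h : ¬ inTree a e) :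
    expStep ord a s =
      { A := s.A
        Lq := rest.filter (fun f => decide (f.1 ≠ e.1 ∧ f.2 ≠ e.1))
        F := s.F.filter (fun f => f.1 ≠ e.1 ∧ f.2 ≠ e.1)
        Er := insert e.1 s.Er } := by
  unfold expStep; rw [hL]; simp [h]

lemma expRun_eq_of_Lq_nil {m : ℕ} (hm : m ≤ 2 * Fintype.card (V × V) + 1)
    (h : ((expStep ord a)^[m] (expInit ord a)).Lq = []) :
    expRun ord a = (expStep ord a)^[m] (expInit ord a) := by
  obtain ⟨p, hp⟩ := Nat.exists_eq_add_of_le hm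
  unfold expRun
  rw [hp, add_comm, Function.iterate_add_apply,
    Function.iterate_fixed (expStep_of_Lq_nil ord a h)]

lemma expInit_Lq_eq {S : Finset V} (hS : ∀ x, E x a.root ↔ x ∈ S) :
    (expInit ord a).Lq = (letI := ord; (S.sort (· ≤ ·)).map (fun u => (u, a.root))) := by
  have hS' : univ.filter (fun u => E u a.root) = S := by ext x; simp [hS x]
  unfold expInit
  simp only [hS']

lemma expPsi_eq_of_hub {W : Finset V} {c : V} (hW : W ⊆ expPhi ord a) (hroot : a.root ∈ W)
    (hclosed : ∀ x ∈ W, ∀ y ∈ expPhi ord a, E x y → y ∈ W)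
    (hto : ∀ u ∈ W, Relation.ReflTransGen
      (fun p q => E p q ∧ p ∈ expPhi ord a ∧ q ∈ expPhi ord a) u c)
    (hfrom : ∀ u ∈ W, Relation.ReflTransGen
      (fun p q => E p q ∧ p ∈ expPhi ord a ∧ q ∈ expPhi ord a) c u) :
    expPsi ord a = W := by
  ext u
  simp only [expPsi, Finset.mem_filter, Finset.mem_univ, true_and]
  constructor
  · rintro ⟨-, hru, -⟩
    induction hru with
    | refl => exact hroot
    | tail _ hxy ih => exact hclosed _ ih _ hxy.2.2 hxy.1
  · intro hu
    exact ⟨hW hu, (hto _ hroot).trans (hfrom u hu), (hto u hu).trans (hfrom _ hroot)⟩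

end Exploration

noncomputable section

namespace Bouquet

variable {k : ℕ} {n : Fin k → ℕ}

abbrev center : BV k n := Sum.inl none
abbrev petal (i : Fin k) : BV k n := Sum.inl (some i)
abbrev leaf (i : Fin k) (j : Fin (n i)) : BV k n := Sum.inr ⟨i, j⟩

def petalIdx : BV k n → Option (Fin k)
  | Sum.inl none => none
  | Sum.inl (some i) => some i
  | Sum.inr ⟨i, _⟩ => some i

@[simp] lemma petalIdx_center : petalIdx (center : BV k n) = none := rfl
@[simp] lemma petalIdx_petal (i : Fin k) : petalIdx (petal i : BV k n) = some i := rfl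
@[simp] lemma petalIdx_leaf (i : Fin k) (j : Fin (n i)) :
    petalIdx (leaf i j : BV k n) = some i := rfl

lemma petalIdx_eq_none {v : BV k n} : petalIdx v = none ↔ v = center := by
  rcases v with (_ | _) | ⟨_, _⟩ <;> simp

lemma leaf_injective {i : Fin k} : Function.Injective (leaf (n := n) i) := by
  intro j j' h; simpa using h

lemma BE_from_leaf {i : Fin k} {j : Fin (n i)} {y : BV k n} :
    BE k n (leaf i j) y ↔ y = center := by
  rcases y with (_ | _) | _ <;> simp [BE]

lemma BE_from_petal {i : Fin k} {y : BV k n} :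
    BE k n (petal i) y ↔ ∃ j, y = leaf i j := by
  rcases y with (_ | _) | ⟨i', j'⟩
  · simp [BE]
  · simp [BE]
  · simp only [BE, Sum.inr.injEq, Sigma.mk.injEq, exists_and_left]
    exact ⟨by rintro rfl; exact ⟨rfl, j', HEq.rfl⟩, fun h => h.1.symm⟩

lemma BE_from_center {y : BV k n} : BE k n center y ↔ ∃ i, y = petal i := by
  rcases y with (_ | _) | _ <;> simp [BE]

lemma BE_to_center {x : BV k n} : BE k n x center ↔ ∃ i j, x = leaf i j := by
  rcases x with (_ | _) | ⟨i, j⟩ <;> simp [BE]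

lemma BE_to_petal {x : BV k n} {i : Fin k} : BE k n x (petal i) ↔ x = center := by
  rcases x with (_ | _) | _ <;> simp [BE]

lemma BE_to_leaf {x : BV k n} {i : Fin k} {j : Fin (n i)} :
    BE k n x (leaf i j) ↔ x = petal i := by
  rcases x with (_ | _) | _ <;> simp [BE]

section TreeShape

variable (a : SpTree (BE k n))

lemma out_leaf {i : Fin k} {j : Fin (n i)} (h : leaf i j ≠ a.root) :
    a.out (leaf i j) = center :=
  BE_from_leaf.mp (a.edge_mem _ h)

lemma out_petal {i : Fin k} (h : petal i ≠ a.root) : ∃ j, a.out (petal i) = leaf i j :=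
  BE_from_petal.mp (a.edge_mem _ h)

lemma out_center (h : center ≠ a.root) : ∃ i, a.out center = petal i :=
  BE_from_center.mp (a.edge_mem _ h)

/-- Otherwise the centre and another petal would form an `out`-closed set avoiding the
root. -/
lemma out_center_of_petalIdx_root {i₀ : Fin k} (h : petalIdx a.root = some i₀) :
    a.out center = petal i₀ := by
  obtain ⟨i, hi⟩ := out_center a (by rintro hr; rw [← hr] at h; simp at h)
  rw [hi]
  by_contra hii
  let C : Set (BV k n) := {u | u = center ∨ petalIdx u = some i}
  have hC : Set.MapsTo a.out C C := by
    intro u hu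
    by_cases hur : u = a.root
    · rw [hur, a.out_root]; exact hur ▸ hu
    rcases u with (_ | i') | ⟨i', j'⟩
    · simp [C, hi]
    · obtain ⟨j, hj⟩ := out_petal a hur
      simpa [C, hj] using hu
    · simp [C, out_leaf a hur]
  rcases a.root_mem_of_mapsTo hC (x := center) (Or.inl rfl) with hr | hr
  · rw [hr] at h; simp at h
  · exact hii (by rw [h] at hr; cases hr; rfl)

lemma out_petal_of_root_eq_leaf {i₀ : Fin k} {j₀ : Fin (n i₀)} (h : a.root = leaf i₀ j₀) :
    a.out (petal i₀) = leaf i₀ j₀ := by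
  obtain ⟨j, hj⟩ := out_petal a (by rw [h]; simp)
  rw [hj]
  by_contra hjj
  let C : Set (BV k n) := {center, petal i₀, leaf i₀ j}
  have hC : Set.MapsTo a.out C C := by
    rintro u (rfl | rfl | rfl)
    · simp [C, out_center_of_petalIdx_root a (by rw [h]; rfl)]
    · simp [C, hj]
    · simp [C, out_leaf a (by rw [h]; exact hjj)]
  have := a.root_mem_of_mapsTo hC (x := center) (by simp [C])
  simp only [h, Set.mem_insert_iff, reduceCtorEq, Set.mem_singleton_iff, Sum.inr.injEq,
    Sigma.mk.injEq, heq_eq_eq, true_and, false_or, C] at this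
  exact hjj (by rw [this])

lemma out_petal_of_petalIdx_root {i : Fin k} (h : petalIdx a.root = some i) :
    a.out (petal i) = a.root := by
  rcases hr : a.root with (_ | i₀) | ⟨i₀, j₀⟩ <;> rw [hr] at h <;> cases h
  · have := a.out_root; rw [hr] at this; exact this
  · exact out_petal_of_root_eq_leaf a hr

lemma out_petal_of_out_center {i : Fin k} (h : a.out center = petal i) :
    a.out (petal i) = a.root := by
  obtain ⟨i₀, hi₀⟩ := Option.ne_none_iff_exists'.mp
    (mt petalIdx_eq_none.mp fun hr => by rw [← hr, a.out_root, hr] at h; simp at h)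
  rw [out_center_of_petalIdx_root a hi₀] at h
  cases h
  exact out_petal_of_petalIdx_root a hi₀

end TreeShape

@[simp] lemma center_mem_WI {I : Finset (Fin k)} : (center : BV k n) ∈ WI k n I := by
  simp [WI]

@[simp] lemma petal_mem_WI {I : Finset (Fin k)} {i : Fin k} :
    (petal i : BV k n) ∈ WI k n I ↔ i ∈ I := by
  simp [WI]

@[simp] lemma leaf_mem_WI {I : Finset (Fin k)} {i : Fin k} {j : Fin (n i)} :
    (leaf i j : BV k n) ∈ WI k n I ↔ i ∈ I := by
  simp [WI]

lemma WI_injective : Function.Injective (WI k n) := by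
  intro I I' h
  ext i
  rw [← petal_mem_WI (n := n), h, petal_mem_WI]

lemma mem_of_mem_WI {I : Finset (Fin k)} {v : BV k n} {i : Fin k} (hv : v ∈ WI k n I)
    (hi : petalIdx v = some i) : i ∈ I := by
  rcases v with (_ | _) | ⟨_, _⟩ <;> simp_all

section Run

variable (ord : LinearOrder (BV k n)) (a : SpTree (BE k n))

def reservoir : Finset (BV k n × BV k n) :=
  univ.filter fun f => BE k n f.1 f.2 ∧ f.1 ≠ a.root

lemma mem_reservoir {f : BV k n × BV k n} :
    f ∈ reservoir a ↔ BE k n f.1 f.2 ∧ f.1 ≠ a.root := by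
  simp [reservoir]

lemma expInit_F : (expInit ord a).F = reservoir a := by
  ext f; simp [expInit, mem_reservoir]

/-- The entry that a leaf of petal `i` contributes to the list: the edge from `petal i`,
which is never added if `petal i` is the root, and is deleted once petal `i` has been
decided (explored or erased; recorded in `D`). -/
def petalEdge (D : Finset (Fin k)) : BV k n → List (BV k n × BV k n)
  | Sum.inr ⟨i, j⟩ => if petal i ≠ a.root ∧ i ∉ D then [(petal i, leaf i j)] else []
  | _ => []

/-- Sorted by `ord` explicitly: on the sum type `BV k n`, `≤` would find the sum order. -/
def leafList (w : BV k n) : List (BV k n) :=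
  (univ.filter fun u => (∃ i j, u = leaf i j) ∧ u ≠ w).sort fun x y => @LE.le _ ord.toLE x y

lemma leafList_nodup (w : BV k n) : (leafList ord w).Nodup :=
  Finset.sort_nodup _ _

lemma mem_leafList {w u : BV k n} : u ∈ leafList ord w ↔ (∃ i j, u = leaf i j) ∧ u ≠ w := by
  simp [leafList]

lemma sortedTo_reservoir_leaf (i : Fin k) (j : Fin (n i)) :
    sortedTo ord (reservoir a) (leaf i j) = petalEdge a ∅ (leaf i j) := by
  rw [sortedTo_of_unique_source ord (u := petal i)
    fun f hf h2 => BE_to_leaf.mp (h2 ▸ ((mem_reservoir a).mp hf).1)]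
  simp [petalEdge, mem_reservoir, BE_to_leaf]

lemma sortedTo_reservoir_center :
    sortedTo ord (reservoir a) center = (leafList ord a.root).map (·, center) := by
  unfold sortedTo leafList
  congr 2
  ext u
  simp only [Finset.mem_image, Finset.mem_filter, Finset.mem_univ, true_and, mem_reservoir]
  constructor
  · rintro ⟨f, ⟨⟨hE, hne⟩, h2⟩, rfl⟩
    exact ⟨BE_to_center.mp (h2 ▸ hE), hne⟩
  · rintro ⟨⟨i, j, rfl⟩, hne⟩
    exact ⟨(leaf i j, center), ⟨⟨BE_to_center.mpr ⟨i, j, rfl⟩, hne⟩, rfl⟩, rfl⟩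

lemma sortedTo_reservoir_petal (h : center ≠ a.root) (i : Fin k) :
    sortedTo ord (reservoir a) (petal i) = [(center, petal i)] := by
  rw [sortedTo_of_unique_source ord (u := center)
    fun f hf h2 => BE_to_petal.mp (h2 ▸ ((mem_reservoir a).mp hf).1)]
  simp [mem_reservoir, BE_to_petal, h]

lemma length_leafList_lt (w : BV k n) : (leafList ord w).length < Fintype.card (BV k n) := by
  rw [← List.toFinset_card_of_nodup (leafList_nodup ord w)]
  exact Finset.card_lt_univ_of_notMem (x := center) (by simp [mem_leafList])

/-- Every leaf other than the root points to the centre, so each edge `(leaf, center)` of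
the list is a tree edge and brings in the edge from its petal. -/
lemma iterate_expStep_leaves (ls : List (BV k n)) (suf : List (BV k n × BV k n))
    (s : ExpState (BV k n)) (hnd : ls.Nodup)
    (hls : ∀ u ∈ ls, (∃ i j, u = leaf i j) ∧ u ≠ a.root)
    (hsuf : ∀ e ∈ suf, ∃ i, e.1 = petal i)
    (hL : s.Lq = ls.map (·, center) ++ suf) (hF : s.F = reservoir a) :
    (expStep ord a)^[ls.length] s =
      { A := s.A ∪ ls.toFinset
        Lq := suf ++ ls.flatMap (petalEdge a ∅)
        F := reservoir a
        Er := s.Er } := by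
  induction ls generalizing suf s with
  | nil =>
    obtain ⟨A, L, F, Er⟩ := s
    simp only [List.map_nil, List.nil_append] at hL hF
    simp [hL, hF]
  | cons u ls ih =>
    obtain ⟨⟨i, j, rfl⟩, hur⟩ := hls u (by simp)
    have hnd' := List.nodup_cons.mp hnd
    have hstep : expStep ord a s =
        { A := insert (leaf i j) s.A
          Lq := ls.map (·, center) ++ (suf ++ petalEdge a ∅ (leaf i j))
          F := reservoir a
          Er := s.Er } := by
      rw [expStep_of_inTree ord a (hL.trans (List.cons_append ..)) ⟨hur, out_leaf a hur⟩, hF,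
        sortedTo_reservoir_leaf, List.filter_eq_self.mpr, List.append_assoc]
      · congr 1; ext; simp
      intro e he
      rcases List.mem_append.mp he with he | he
      · obtain ⟨u, hu, rfl⟩ := List.mem_map.mp he
        simpa using fun h : u = leaf i j => hnd'.1 (h ▸ hu)
      · obtain ⟨i', hi'⟩ := hsuf e he
        simp [hi']
    have hsuf' : ∀ e ∈ suf ++ petalEdge a ∅ (leaf i j), ∃ i', e.1 = petal i' := by
      intro e he
      rcases List.mem_append.mp he with he | he
      · exact hsuf e he
      · simp only [petalEdge] at he
        split_ifs at he
        · exact ⟨i, by rw [List.mem_singleton.mp he]⟩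
        · simp at he
    rw [List.length_cons, Function.iterate_succ_apply, hstep,
      ih _ _ hnd'.2 (fun u hu => hls u (by simp [hu])) hsuf' rfl rfl]
    congr 1
    · rw [List.toFinset_cons, Finset.union_insert, Finset.insert_union]
    · rw [List.flatMap_cons, List.append_assoc]

def firstLeaf (q : List (BV k n)) (i : Fin k) : Option (BV k n) :=
  q.find? fun u => petalIdx u = some i

def exploredPetals (q : List (BV k n)) (D : Finset (Fin k)) : Finset (Fin k) :=
  univ.filter fun i => i ∉ D ∧ petal i ≠ a.root ∧ firstLeaf q i = some (a.out (petal i))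

lemma firstLeaf_cons_self (i : Fin k) (j : Fin (n i)) (q : List (BV k n)) :
    firstLeaf (leaf i j :: q) i = some (leaf i j) := by
  simp [firstLeaf]

lemma firstLeaf_cons_of_ne {i i' : Fin k} (h : i' ≠ i) (j : Fin (n i)) (q : List (BV k n)) :
    firstLeaf (leaf i j :: q) i' = firstLeaf q i' := by
  simp [firstLeaf, h.symm]

lemma exists_firstLeaf_eq {q : List (BV k n)} {i : Fin k}
    (hq : ∀ u ∈ q, ∃ i j, u = leaf i j) (h : ∃ u ∈ q, petalIdx u = some i) :
    ∃ j, firstLeaf q i = some (leaf i j) := by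
  obtain ⟨u₀, hu₀, hi₀⟩ := h
  obtain ⟨u, hu⟩ := Option.isSome_iff_exists.mp
    (List.find?_isSome.mpr ⟨u₀, hu₀, by simpa using hi₀⟩ : (firstLeaf q i).isSome)
  have hu' : q.find? (fun u => petalIdx u = some i) = some u := hu
  have hpet : petalIdx u = some i := by simpa using List.find?_some hu'
  obtain ⟨i', j, rfl⟩ := hq u (List.mem_of_find?_eq_some hu')
  cases hpet
  exact ⟨j, hu⟩

lemma exploredPetals_cons_of_decided {i : Fin k} {D : Finset (Fin k)}
    (h : petal i = a.root ∨ i ∈ D) (j : Fin (n i)) (q : List (BV k n)) :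
    exploredPetals a (leaf i j :: q) D = exploredPetals a q D := by
  ext i'
  simp only [exploredPetals, Finset.mem_filter, Finset.mem_univ, true_and]
  rcases eq_or_ne i' i with rfl | hne
  · tauto
  · rw [firstLeaf_cons_of_ne hne]

lemma exploredPetals_cons_of_undecided {i : Fin k} {D : Finset (Fin k)}
    (hr : petal i ≠ a.root) (hD : i ∉ D) (j : Fin (n i)) (q : List (BV k n)) :
    exploredPetals a (leaf i j :: q) D =
      if a.out (petal i) = leaf i j then insert i (exploredPetals a q (insert i D))
      else exploredPetals a q (insert i D) := by
  ext i'
  rcases eq_or_ne i' i with rfl | hne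
  · split_ifs with h
    · simp [exploredPetals, firstLeaf_cons_self, hr, hD, h]
    · simp [exploredPetals, firstLeaf_cons_self, hD, Ne.symm h]
  · split_ifs <;> simp [exploredPetals, firstLeaf_cons_of_ne hne, hne]

lemma filter_flatMap_petalEdge {D : Finset (Fin k)} (i : Fin k) {p : BV k n × BV k n → Bool}
    (hp : ∀ i' (j' : Fin (n i')), p (petal i', leaf i' j') = true ↔ i' ≠ i)
    {q : List (BV k n)} (hq : ∀ u ∈ q, ∃ i' j', u = leaf i' j') :
    (q.flatMap (petalEdge a D)).filter p = q.flatMap (petalEdge a (insert i D)) := by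
  rw [List.filter_flatMap]
  refine List.flatMap_congr fun u hu => ?_
  obtain ⟨i', j', rfl⟩ := hq u hu
  simp only [petalEdge]
  by_cases hne : i' = i
  · subst hne
    have hpf : p (petal i', leaf i' j') = false := by simpa using (hp i' j').not
    split_ifs with _ h <;> simp_all
  · have hpt : p (petal i', leaf i' j') = true := (hp i' j').mpr hne
    split_ifs <;> simp_all

/-- A state of the second phase of the exploration: the leaves of `q` have still to
contribute their petal edges, the petals of `S` have been explored and those of `X` erased,
and `pending` holds the edges `0 → i` queued by the explored petals. -/
structure PetalPhase (q : List (BV k n)) (pending : List (BV k n × BV k n))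
    (X S : Finset (Fin k)) (A₀ : Finset (BV k n)) (s : ExpState (BV k n)) : Prop where
  leaves : ∀ u ∈ q, (∃ i j, u = leaf i j) ∧ u ≠ a.root
  pending_eq : ∀ e ∈ pending, ∃ i ∈ S, e = (center, petal i) ∧ a.out center ≠ petal i
  A_eq : s.A = A₀ ∪ S.image petal
  F_eq : s.F = (reservoir a).filter fun f => ∀ i ∈ X, f.1 ≠ petal i ∧ f.2 ≠ petal i
  Lq_eq : s.Lq = q.flatMap (petalEdge a (X ∪ S)) ++ pending

namespace PetalPhase

variable {a} {q : List (BV k n)} {pending : List (BV k n × BV k n)} {X S : Finset (Fin k)}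
  {A₀ : Finset (BV k n)} {s : ExpState (BV k n)} {i : Fin k} {j : Fin (n i)}

lemma tail (h : PetalPhase a (leaf i j :: q) pending X S A₀ s) :
    ∀ u ∈ q, (∃ i j, u = leaf i j) ∧ u ≠ a.root :=
  fun u hu => h.leaves u (List.mem_cons_of_mem _ hu)

lemma skip (h : PetalPhase a (leaf i j :: q) pending X S A₀ s)
    (hd : petal i = a.root ∨ i ∈ X ∪ S) : PetalPhase a q pending X S A₀ s where
  leaves := h.tail
  pending_eq := h.pending_eq
  A_eq := h.A_eq
  F_eq := h.F_eq
  Lq_eq := by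
    rw [h.Lq_eq, List.flatMap_cons]
    simp only [petalEdge]
    rw [if_neg (by tauto), List.nil_append]

lemma Lq_eq_cons (h : PetalPhase a (leaf i j :: q) pending X S A₀ s)
    (hr : petal i ≠ a.root) (hD : i ∉ X ∪ S) :
    s.Lq = (petal i, leaf i j) :: (q.flatMap (petalEdge a (X ∪ S)) ++ pending) := by
  rw [h.Lq_eq, List.flatMap_cons]
  simp [petalEdge, hr, hD]

lemma explore (h : PetalPhase a (leaf i j :: q) pending X S A₀ s)
    (hr : petal i ≠ a.root) (hD : i ∉ X ∪ S) (hout : a.out (petal i) = leaf i j) :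
    PetalPhase a q (pending ++ sortedTo ord s.F (petal i)) X (insert i S) A₀
      (expStep ord a s) := by
  rw [expStep_of_inTree ord a (h.Lq_eq_cons hr hD) ⟨hr, hout⟩]
  refine ⟨h.tail, ?_, ?_, h.F_eq, ?_⟩
  · intro e he
    rcases List.mem_append.mp he with he | he
    · obtain ⟨i', hi', rfl, hc⟩ := h.pending_eq e he
      exact ⟨i', Finset.mem_insert_of_mem hi', rfl, hc⟩
    obtain ⟨heF, he2⟩ := (mem_sortedTo ord).mp he
    rw [h.F_eq, Finset.mem_filter, mem_reservoir, he2, BE_to_petal] at heF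
    refine ⟨i, Finset.mem_insert_self _ _, Prod.ext heF.1.1 he2, fun hc => ?_⟩
    exact (h.leaves _ List.mem_cons_self).2 (hout ▸ out_petal_of_out_center a hc)
  · ext v
    simp only [Finset.mem_insert, h.A_eq, Finset.mem_union, Finset.mem_image]
    aesop
  · rw [List.filter_append, filter_flatMap_petalEdge a i (by simp) fun u hu => (h.tail u hu).1,
      List.filter_eq_self.mpr, Finset.union_insert, List.append_assoc]
    intro e he
    obtain ⟨i', -, rfl, -⟩ := h.pending_eq e he
    simp

lemma erase (h : PetalPhase a (leaf i j :: q) pending X S A₀ s)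
    (hr : petal i ≠ a.root) (hD : i ∉ X ∪ S) (hout : a.out (petal i) ≠ leaf i j) :
    PetalPhase a q pending (insert i X) S A₀ (expStep ord a s) := by
  rw [expStep_of_not_inTree ord a (h.Lq_eq_cons hr hD) fun ht => hout ht.2]
  refine ⟨h.tail, h.pending_eq, h.A_eq, ?_, ?_⟩
  · rw [h.F_eq]
    ext f
    simp only [Finset.mem_filter, Finset.mem_insert, forall_eq_or_imp]
    tauto
  · rw [List.filter_append, filter_flatMap_petalEdge a i (by simp) fun u hu => (h.tail u hu).1,
      List.filter_eq_self.mpr, Finset.insert_union]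
    intro e he
    obtain ⟨i', hi', rfl, -⟩ := h.pending_eq e he
    have : i' ≠ i := by rintro rfl; exact hD (Finset.mem_union_right _ hi')
    simp [this]

/-- At the end of the second phase the first pending edge, if any, erases the centre and
with it the other pending edges. -/
lemma finish (h : PetalPhase a [] pending X S A₀ s) :
    ∃ m ≤ 1, ((expStep ord a)^[m] s).Lq = [] ∧ ((expStep ord a)^[m] s).A = s.A := by
  have hL := h.Lq_eq
  rw [List.flatMap_nil, List.nil_append] at hL
  cases pending with
  | nil => exact ⟨0, zero_le_one, hL, rfl⟩
  | cons e rest =>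
    obtain ⟨i, -, rfl, hc⟩ := h.pending_eq e List.mem_cons_self
    have hstep := expStep_of_not_inTree ord a hL fun ht => hc ht.2
    refine ⟨1, le_rfl, ?_, by rw [Function.iterate_one, hstep]⟩
    rw [Function.iterate_one, hstep]
    refine List.filter_eq_nil_iff.mpr fun e he => ?_
    obtain ⟨i', -, rfl, -⟩ := h.pending_eq e (List.mem_cons_of_mem _ he)
    simp

lemma run (h : PetalPhase a q pending X S A₀ s) :
    ∃ m ≤ q.length + 1, ((expStep ord a)^[m] s).Lq = [] ∧
      ((expStep ord a)^[m] s).A = A₀ ∪ (S ∪ exploredPetals a q (X ∪ S)).image petal := by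
  induction q generalizing pending X S s with
  | nil =>
    obtain ⟨m, hm, hL, hA⟩ := h.finish ord
    exact ⟨m, hm, hL, by simp [hA, h.A_eq, exploredPetals, firstLeaf]⟩
  | cons u q ih =>
    obtain ⟨⟨i, j, rfl⟩, -⟩ := h.leaves _ List.mem_cons_self
    by_cases hd : petal i = a.root ∨ i ∈ X ∪ S
    · obtain ⟨m, hm, hL, hA⟩ := ih (h.skip hd)
      exact ⟨m, by simp only [List.length_cons]; omega, hL,
        by rw [hA, exploredPetals_cons_of_decided a hd]⟩
    obtain ⟨hr, hD⟩ := not_or.mp hd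
    rw [exploredPetals_cons_of_undecided a hr hD]
    by_cases hout : a.out (petal i) = leaf i j
    · obtain ⟨m, hm, hL, hA⟩ := ih (h.explore ord hr hD hout)
      refine ⟨m + 1, by simp only [List.length_cons]; omega, hL, ?_⟩
      rw [Function.iterate_succ_apply, hA, if_pos hout, Finset.union_insert, Finset.insert_union,
        Finset.union_insert]
    · obtain ⟨m, hm, hL, hA⟩ := ih (h.erase ord hr hD hout)
      refine ⟨m + 1, by simp only [List.length_cons]; omega, hL, ?_⟩
      rw [Function.iterate_succ_apply, hA, if_neg hout, Finset.insert_union]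

end PetalPhase

structure LeafPhaseStart (s : ExpState (BV k n)) : Prop where
  A_eq : s.A = {a.root, center} ∪ (petalIdx a.root).toFinset.image petal
  Lq_eq : s.Lq = (leafList ord a.root).map (·, center)
  F_eq : s.F = reservoir a

lemma leafPhaseStart_of_root_eq_center (h : a.root = center) :
    LeafPhaseStart ord a (expInit ord a) where
  A_eq := by simp [expInit, h]
  Lq_eq := by
    rw [expInit_Lq_eq ord a (S := univ.filter fun u => (∃ i j, u = leaf i j) ∧ u ≠ a.root)]
    · rw [h]; rfl
    · intro x
      simp only [h, BE_to_center, Finset.mem_filter, Finset.mem_univ, true_and,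
        iff_self_and]
      rintro ⟨_, _, rfl⟩
      simp
  F_eq := expInit_F ord a

lemma leafPhaseStart_of_root_eq_petal {i : Fin k} (h : a.root = petal i) :
    LeafPhaseStart ord a (expStep ord a (expInit ord a)) := by
  have hL : (expInit ord a).Lq = [(center, a.root)] := by
    rw [expInit_Lq_eq ord a (S := {center}) (by simp [h, BE_to_petal])]
    simp
  have hstep := expStep_of_inTree ord a hL
    ⟨by simp [h], (out_center_of_petalIdx_root a (i₀ := i) (by simp [h])).trans h.symm⟩
  refine ⟨?_, ?_, ?_⟩ <;> rw [hstep]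
  · ext v; simp [expInit, h]
  · simp [expInit_F, sortedTo_reservoir_center]
  · exact expInit_F ord a

lemma leafPhaseStart_of_root_eq_leaf {i : Fin k} {j : Fin (n i)} (h : a.root = leaf i j) :
    LeafPhaseStart ord a ((expStep ord a)^[2] (expInit ord a)) := by
  have hc : center ≠ a.root := by simp [h]
  have hL : (expInit ord a).Lq = [(petal i, a.root)] := by
    rw [expInit_Lq_eq ord a (S := {petal i}) (by simp [h, BE_to_leaf])]
    simp
  have hstep := expStep_of_inTree ord a hL ⟨by simp [h], h ▸ out_petal_of_root_eq_leaf a h⟩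
  have hL' : (expStep ord a (expInit ord a)).Lq = [(center, petal i)] := by
    simp [hstep, expInit_F, sortedTo_reservoir_petal ord a hc]
  have hstep' := expStep_of_inTree ord a hL'
    ⟨hc, out_center_of_petalIdx_root a (by simp [h])⟩
  refine ⟨?_, ?_, ?_⟩ <;> rw [Function.iterate_succ_apply', Function.iterate_one, hstep']
  · rw [hstep]
    ext v
    simp only [expInit, h, mem_insert, mem_singleton, petalIdx_leaf, Option.toFinset_some,
      image_singleton, insert_union, singleton_union]
    tauto
  · simp [hstep, expInit_F, sortedTo_reservoir_center]
  · rw [hstep]; exact expInit_F ord a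

lemma exists_leafPhaseStart :
    ∃ c ≤ 2, LeafPhaseStart ord a ((expStep ord a)^[c] (expInit ord a)) := by
  rcases hr : a.root with (_ | i) | ⟨i, j⟩
  · exact ⟨0, by omega, leafPhaseStart_of_root_eq_center ord a hr⟩
  · exact ⟨1, by omega, leafPhaseStart_of_root_eq_petal ord a hr⟩
  · exact ⟨2, le_rfl, leafPhaseStart_of_root_eq_leaf ord a hr⟩

lemma expPhi_eq : expPhi ord a =
    {a.root, center} ∪ (petalIdx a.root).toFinset.image petal ∪
      (leafList ord a.root).toFinset ∪
      (exploredPetals a (leafList ord a.root) ∅).image petal := by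
  obtain ⟨c, hc, hs⟩ := exists_leafPhaseStart ord a
  set s := (expStep ord a)^[c] (expInit ord a)
  set ls := leafList ord a.root
  have hls : ∀ u ∈ ls, (∃ i j, u = leaf i j) ∧ u ≠ a.root := fun u hu => (mem_leafList ord).mp hu
  have hleaves := iterate_expStep_leaves ord a ls [] s (leafList_nodup ord _) hls (by simp)
    (by rw [hs.Lq_eq, List.append_nil]) hs.F_eq
  have hpetal : PetalPhase a ls [] ∅ ∅ (s.A ∪ ls.toFinset) ((expStep ord a)^[ls.length] s) := by
    refine ⟨hls, by simp, ?_, ?_, ?_⟩ <;> rw [hleaves] <;> simp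
  obtain ⟨m, hm, hL, hA⟩ := hpetal.run ord
  rw [← Function.iterate_add_apply, ← Function.iterate_add_apply] at hL hA
  have hbound : m + ls.length + c ≤ 2 * Fintype.card (BV k n × BV k n) + 1 := by
    have := length_leafList_lt ord a.root
    rw [Fintype.card_prod]; nlinarith
  unfold expPhi
  rw [expRun_eq_of_Lq_nil ord a hbound hL, hA, hs.A_eq]
  simp

def psiPetals : Finset (Fin k) :=
  exploredPetals a (leafList ord a.root) ∅ ∪ (petalIdx a.root).toFinset

lemma mem_expPhi {v : BV k n} : v ∈ expPhi ord a ↔ ∀ i, v = petal i → i ∈ psiPetals ord a := by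
  rw [expPhi_eq]
  rcases v with (_ | i) | ⟨i, j⟩
  · simp
  · have : petal i = a.root → petalIdx a.root = some i := fun h => h ▸ rfl
    simp only [insert_union, singleton_union, union_assoc, mem_insert, Sum.inl.injEq,
      reduceCtorEq, mem_union, mem_image, Option.mem_toFinset, Option.mem_def,
      Option.some.injEq, exists_eq_right, List.mem_toFinset, mem_leafList, exists_false, ne_eq,
      false_and, false_or, psiPetals, forall_eq']
    tauto
  · by_cases h : leaf i j = a.root
    · simp only [h, Finset.mem_union, Finset.mem_insert, true_or, true_iff]
      rintro i' hi'
      simp [hi'] at h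
    · simp [mem_leafList, h]

lemma center_mem_expPhi : center ∈ expPhi ord a := by simp [mem_expPhi]

lemma leaf_mem_expPhi (i : Fin k) (j : Fin (n i)) : leaf i j ∈ expPhi ord a := by
  simp [mem_expPhi]

lemma petal_mem_expPhi {i : Fin k} : petal i ∈ expPhi ord a ↔ i ∈ psiPetals ord a := by
  simp [mem_expPhi]

lemma root_mem_WI_psiPetals : a.root ∈ WI k n (psiPetals ord a) := by
  rcases hr : a.root with (_ | i) | ⟨i, j⟩ <;> simp [WI, psiPetals, hr]

theorem expPsi_eq (hn : ∀ i, 1 ≤ n i) : expPsi ord a = WI k n (psiPetals ord a) := by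
  have hpetal := fun i => (petal_mem_expPhi ord a (i := i)).mpr
  have hcenter := center_mem_expPhi ord a
  have hleaf := leaf_mem_expPhi ord a
  refine expPsi_eq_of_hub ord a (c := center) ?_ (root_mem_WI_psiPetals ord a) ?_ ?_ ?_
  · intro v hv
    rw [mem_expPhi]
    rintro i rfl
    exact petal_mem_WI.mp hv
  · rintro ((_ | i) | ⟨i, j⟩) hx y hy hxy
    · obtain ⟨i', rfl⟩ := BE_from_center.mp hxy
      exact petal_mem_WI.mpr ((petal_mem_expPhi ord a).mp hy)
    · obtain ⟨j', rfl⟩ := BE_from_petal.mp hxy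
      exact leaf_mem_WI.mpr (petal_mem_WI.mp hx)
    · rw [BE_from_leaf.mp hxy]
      exact center_mem_WI
  · rintro ((_ | i) | ⟨i, j⟩) hu
    · exact .refl
    · have hi := hpetal i (petal_mem_WI.mp hu)
      exact .head ⟨BE_from_petal.mpr ⟨⟨0, hn i⟩, rfl⟩, hi, hleaf i _⟩
        (.single ⟨BE_from_leaf.mpr rfl, hleaf i _, hcenter⟩)
    · exact .single ⟨BE_from_leaf.mpr rfl, hleaf i j, hcenter⟩
  · rintro ((_ | i) | ⟨i, j⟩) hu
    · exact .refl
    · exact .single ⟨BE_from_center.mpr ⟨i, rfl⟩, hcenter, hpetal i (petal_mem_WI.mp hu)⟩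
    · have hi := hpetal i (leaf_mem_WI.mp hu)
      exact .head ⟨BE_from_center.mpr ⟨i, rfl⟩, hcenter, hi⟩
        (.single ⟨BE_from_petal.mpr ⟨j, rfl⟩, hi, hleaf i j⟩)

end Run

section Profile

variable (hn : ∀ i, 1 ≤ n i)

/-- The index of `v` as a leaf of petal `i`, with junk value `0` if `v` is no such leaf. -/
def leafIdx (i : Fin k) (v : BV k n) : Fin (n i) :=
  if h : ∃ j, v = leaf i j then h.choose else ⟨0, hn i⟩

@[simp] lemma leafIdx_leaf (i : Fin k) (j : Fin (n i)) : leafIdx hn i (leaf i j) = j := by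
  have h : ∃ j', (leaf i j : BV k n) = leaf i j' := ⟨j, rfl⟩
  rw [leafIdx, dif_pos h]
  exact leaf_injective h.choose_spec.symm

def profile (a : SpTree (BE k n)) (i : Fin k) : Fin (n i) :=
  leafIdx hn i (a.out (petal i))

lemma out_petal_eq_leaf_profile (a : SpTree (BE k n)) {i : Fin k} (h : petal i ≠ a.root) :
    a.out (petal i) = leaf i (profile hn a i) := by
  obtain ⟨j, hj⟩ := out_petal a h
  rw [profile, hj, leafIdx_leaf]

lemma profile_of_petalIdx_root (a : SpTree (BE k n)) {i : Fin k}
    (h : petalIdx a.root = some i) : profile hn a i = leafIdx hn i a.root := by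
  rw [profile, out_petal_of_petalIdx_root a h]

def profileOut (w : BV k n) (c : ∀ i, Fin (n i)) : BV k n → BV k n
  | Sum.inl none => (petalIdx w).elim center petal
  | Sum.inl (some i) => if petal i = w then w else leaf i (c i)
  | Sum.inr ⟨i, j⟩ => if leaf i j = w then w else center

lemma profileOut_self (w : BV k n) (c : ∀ i, Fin (n i)) : profileOut w c w = w := by
  rcases w with (_ | _) | ⟨_, _⟩ <;> simp [profileOut]

lemma profileOut_edge (w : BV k n) (c : ∀ i, Fin (n i)) {v : BV k n} (hv : v ≠ w) :
    BE k n v (profileOut w c v) := by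
  rcases v with (_ | i) | ⟨i, j⟩
  · obtain ⟨i, hi⟩ := Option.ne_none_iff_exists'.mp (mt petalIdx_eq_none.mp hv.symm)
    simp [profileOut, hi, BE]
  · simp [profileOut, hv, BE]
  · simp [profileOut, hv, BE]

lemma profileOut_reach (w : BV k n) (c : ∀ i, Fin (n i))
    (hc : ∀ i, petalIdx w = some i → c i = leafIdx hn i w) (v : BV k n) :
    ∃ m, (profileOut w c)^[m] v = w := by
  set f := profileOut w c
  have step : ∀ {u}, (∃ m, f^[m] (f u) = w) → ∃ m, f^[m] u = w :=
    fun ⟨m, hm⟩ => ⟨m + 1, hm⟩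
  have hcenter : ∃ m, f^[m] center = w := by
    rcases w with (_ | i) | ⟨i, j⟩
    · exact ⟨0, rfl⟩
    · exact ⟨1, by simp [f, profileOut]⟩
    · have := hc i rfl
      exact ⟨2, by simp [f, profileOut, this]⟩
  have hleaf : ∀ i j, ∃ m, f^[m] (leaf i j) = w := by
    intro i j
    by_cases h : leaf i j = w
    · exact ⟨0, h⟩
    · exact step (by simpa [f, profileOut, h] using hcenter)
  rcases v with (_ | i) | ⟨i, j⟩
  · exact hcenter
  · by_cases h : petal i = w
    · exact ⟨0, h⟩
    · exact step (by simpa [f, profileOut, h] using hleaf i (c i))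
  · exact hleaf i j

def treeOfProfile (w : BV k n) (c : ∀ i, Fin (n i))
    (hc : ∀ i, petalIdx w = some i → c i = leafIdx hn i w) : SpTree (BE k n) where
  root := w
  out := profileOut w c
  out_root := profileOut_self w c
  edge_mem _ := profileOut_edge w c
  reach := profileOut_reach hn w c hc

def rootedTreeEquiv (w : BV k n) :
    {a : SpTree (BE k n) // a.root = w} ≃
      {c : ∀ i, Fin (n i) // ∀ i, petalIdx w = some i → c i = leafIdx hn i w} where
  toFun a := ⟨profile hn a, fun i hi => by
    obtain ⟨a, rfl⟩ := a; exact profile_of_petalIdx_root hn a hi⟩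
  invFun c := ⟨treeOfProfile hn w c c.2, rfl⟩
  left_inv := by
    rintro ⟨a, rfl⟩
    refine Subtype.ext (SpTree.ext' rfl (funext fun v => ?_))
    show profileOut a.root (profile hn a) v = a.out v
    by_cases hv : v = a.root
    · rw [hv, profileOut_self, a.out_root]
    rcases v with (_ | i) | ⟨i, j⟩
    · obtain ⟨i, hi⟩ := Option.ne_none_iff_exists'.mp (mt petalIdx_eq_none.mp (Ne.symm hv))
      simp [profileOut, hi, out_center_of_petalIdx_root a hi]
    · simp [profileOut, hv, out_petal_eq_leaf_profile hn a hv]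
    · simp [profileOut, hv, out_leaf a hv]
  right_inv := by
    rintro ⟨c, hc⟩
    refine Subtype.ext (funext fun i => ?_)
    show leafIdx hn i (profileOut w c (petal i)) = c i
    by_cases h : petal i = w
    · rw [h, profileOut_self, hc i (by rw [← h]; rfl)]
    · simp [profileOut, h]

end Profile

section Count

variable (ord : LinearOrder (BV k n)) (hn : ∀ i, 1 ≤ n i)

/-- The condition on the leaf `x` chosen by petal `i` for a tree rooted at `w` to have
`ψ = W_I`. -/
def ProfileCond (w : BV k n) (I : Finset (Fin k)) (i : Fin k) (x : Fin (n i)) : Prop :=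
  (petalIdx w = some i → x = leafIdx hn i w) ∧
    (petalIdx w ≠ some i → (i ∈ I ↔ firstLeaf (leafList ord w) i = some (leaf i x)))

lemma expPsi_eq_WI_iff {I : Finset (Fin k)} (a : SpTree (BE k n)) (hw : a.root ∈ WI k n I) :
    expPsi ord a = WI k n I ↔ ∀ i, ProfileCond ord hn a.root I i (profile hn a i) := by
  rw [expPsi_eq ord a hn, WI_injective.eq_iff, Finset.ext_iff]
  refine forall_congr' fun i => ?_
  by_cases hi : petalIdx a.root = some i
  · simp [ProfileCond, psiPetals, hi, mem_of_mem_WI hw hi, profile_of_petalIdx_root hn a hi]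
  · have hr : petal i ≠ a.root := fun h => hi (h ▸ rfl)
    simp only [ProfileCond, psiPetals, exploredPetals, Finset.mem_union, Finset.mem_filter, Finset.mem_univ,
      Finset.notMem_empty, not_false_eq_true, true_and, Option.mem_toFinset, Option.mem_def, hi,
      or_false, ne_eq, hr, out_petal_eq_leaf_profile hn a hr]
    tauto

lemma card_profileCond {w : BV k n} {I : Finset (Fin k)} (hw : w ∈ WI k n I) (i : Fin k) :
    Nat.card {x // ProfileCond ord hn w I i x} = if i ∈ I then 1 else n i - 1 := by
  by_cases hi : petalIdx w = some i
  · simp [ProfileCond, hi, mem_of_mem_WI hw hi]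
  obtain ⟨j₀, hj₀⟩ := exists_firstLeaf_eq (q := leafList ord w)
    (fun u hu => ((mem_leafList ord).mp hu).1)
    ⟨leaf i ⟨0, hn i⟩, (mem_leafList ord).mpr ⟨⟨i, _, rfl⟩, fun h => hi (by rw [← h]; rfl)⟩, rfl⟩
  simp only [ProfileCond, hi, hj₀, IsEmpty.forall_iff, true_and, ne_eq, not_false_eq_true,
    forall_const, Option.some.injEq, leaf_injective.eq_iff]
  split_ifs with hI
  · simp [hI]
  · simp [hI, Nat.card_eq_fintype_card, Fintype.card_subtype_compl]

end Count

theorem multCount_WI (ord : LinearOrder (BV k n)) (hn : ∀ i, 1 ≤ n i) {I : Finset (Fin k)}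
    {w : BV k n} (hw : w ∈ WI k n I) :
    multCount (BE k n) ord (WI k n I) w = ∏ i ∈ Iᶜ, (n i - 1) := by
  rw [multCount]
  calc Nat.card {a // a.root = w ∧ expPsi ord a = WI k n I}
      = Nat.card {a : {a : SpTree (BE k n) // a.root = w} // expPsi ord a.1 = WI k n I} :=
        Nat.card_congr (Equiv.subtypeSubtypeEquivSubtypeInter _ _).symm
    _ = Nat.card {c : {c : ∀ i, Fin (n i) // ∀ i, petalIdx w = some i → c i = leafIdx hn i w} //
          ∀ i, ProfileCond ord hn w I i (c.1 i)} :=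
        Nat.card_congr <| (rootedTreeEquiv hn w).subtypeEquiv fun a => by
          obtain ⟨a, rfl⟩ := a
          exact expPsi_eq_WI_iff ord hn a hw
    _ = Nat.card {c : ∀ i, Fin (n i) // ∀ i, ProfileCond ord hn w I i (c i)} :=
        Nat.card_congr <| Equiv.subtypeSubtypeEquivSubtype
          fun {c : ∀ i, Fin (n i)} (h : ∀ i, ProfileCond ord hn w I i (c i)) i => (h i).1
    _ = ∏ i, Nat.card {x // ProfileCond ord hn w I i x} := by
        rw [Nat.card_congr Equiv.subtypePiEquivPi, Nat.card_pi]
    _ = ∏ i ∈ Iᶜ, (n i - 1) := by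
        rw [Finset.prod_congr rfl fun i _ => card_profileCond ord hn hw i]
        simp only [Finset.prod_ite, Finset.prod_const_one, one_mul]
        congr 1
        ext
        simp

theorem multCount_eq_zero (ord : LinearOrder (BV k n)) (hn : ∀ i, 1 ≤ n i)
    {W : Finset (BV k n)} (hW : ∀ I, W ≠ WI k n I) (w : BV k n) :
    multCount (BE k n) ord W w = 0 := by
  rw [multCount, Nat.card_eq_zero]
  left
  exact ⟨fun ⟨a, _, hψ⟩ => hW _ (hψ.symm.trans (expPsi_eq ord a hn))⟩

end Bouquet

end

theorem statement19_general (k : ℕ) (n : Fin k → ℕ) (hn : ∀ i, 1 ≤ n i)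
    (ord : LinearOrder (BV k n)) :
    (∀ I : Finset (Fin k), ∀ w ∈ WI k n I,
        multCount (BE k n) ord (WI k n I) w = ∏ i ∈ Iᶜ, (n i - 1)) ∧
    (∀ W : Finset (BV k n), W.Nonempty → SConn (BE k n) ↑W →
        (∀ I : Finset (Fin k), W ≠ WI k n I) →
        ∀ w ∈ W, multCount (BE k n) ord W w = 0) :=
  ⟨fun _ _ hw => Bouquet.multCount_WI ord hn hw,
    fun _ _ _ hW w _ => Bouquet.multCount_eq_zero ord hn hW w⟩

/-- In the bouquet graph (with any total ordering of the vertices),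
the multiplicity of `W_I` is `m(W_I) = ∏_{i ∉ I} (n_i − 1)` for every
`I ⊆ {1,…,k}`, and `m(W) = 0` for every strongly connected subset `W` of the
vertices which is not of the form `W_I`. -/
theorem statement19 (k : ℕ) (hk : 1 ≤ k) (n : Fin k → ℕ) (hn : ∀ i, 1 ≤ n i)
    (ord : LinearOrder (BV k n)) :
    (∀ I : Finset (Fin k), ∀ w ∈ WI k n I,
        multCount (BE k n) ord (WI k n I) w = ∏ i ∈ Iᶜ, (n i - 1)) ∧
    (∀ W : Finset (BV k n), W.Nonempty → SConn (BE k n) ↑W →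
        (∀ I : Finset (Fin k), W ≠ WI k n I) →
        ∀ w ∈ W, multCount (BE k n) ord W w = 0) :=
  statement19_general k n hn ord
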